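/- arXiv:1804.06569 — 7 statements merged into one kernel-verified Lean document; each statement's English description precedes it below -/
import Mathlib

section
/- Let V and W be finite-dimensional real inner product spaces, and let T : V → W be linear. Suppose {T_k} is a sequence of geometric functions from V to W converging to T, where for each k the conformality factor r_k of T_k satisfies 0 < p ≤ r_k for some fixed real p > 0. Then there exists K such that for all k > K, rank(T_k) = rank(T). -/
/-!
If `f` is bounded below by `a > 0` on a complement `C` of its kernel, then `dim C = rank f`, and
every `g` with `‖f - g‖ < a` is still injective on `C`, so `rank f ≤ rank g`. Applied to `T`
(which is bounded below on any complement of its kernel, by finite-dimensionality) this gives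
`rank T ≤ rank T_k` for large `k`. Applied to `T_k`, which is bounded below by `√r_k ≥ √p` on the
complement `C_k` of the definition, it gives `rank T_k ≤ rank T` as soon as `‖T_k - T‖ < √p`.
-/

open scoped RealInnerProductSpace

/-- A linear map `f : V → W` between real inner product spaces is a *geometric function*
with conformality factor `r > 0` if there is a subspace `C` with `V = ker f ⊕ C`
(direct sum, not necessarily orthogonal) on which `f` scales inner products by `r`. -/
def IsGeometric {V W : Type*} [NormedAddCommGroup V] [InnerProductSpace ℝ V]
    [NormedAddCommGroup W] [InnerProductSpace ℝ W] (f : V →L[ℝ] W) (r : ℝ) : Prop :=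
  0 < r ∧ ∃ C : Submodule ℝ V, IsCompl (LinearMap.ker (f : V →ₗ[ℝ] W)) C ∧
    ∀ u ∈ C, ∀ v ∈ C, ⟪f u, f v⟫ = r * ⟪u, v⟫

open Module Filter Topology

namespace LinearMap

variable {K V W : Type*} [DivisionRing K] [AddCommGroup V] [Module K V] [AddCommGroup W]
  [Module K W] [FiniteDimensional K V]

theorem finrank_range_eq_of_isCompl_ker (f : V →ₗ[K] W) {C : Submodule K V}
    (h : IsCompl (ker f) C) : finrank K (range f) = finrank K C := by
  have := f.finrank_range_add_finrank_ker
  have := Submodule.finrank_add_eq_of_isCompl h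
  omega

theorem finrank_le_finrank_range_of_disjoint_ker (f : V →ₗ[K] W) {C : Submodule K V}
    (h : Disjoint C (ker f)) : finrank K C ≤ finrank K (range f) := by
  have hsup := Submodule.finrank_sup_add_finrank_inf_eq C (ker f)
  rw [h.eq_bot, finrank_bot] at hsup
  have := Submodule.finrank_le (C ⊔ ker f)
  have := f.finrank_range_add_finrank_ker
  omega

end LinearMap

namespace ContinuousLinearMap

variable {𝕜 E F : Type*} [NontriviallyNormedField 𝕜] [NormedAddCommGroup E] [NormedSpace 𝕜 E]
  [NormedAddCommGroup F] [NormedSpace 𝕜 F]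

theorem finrank_le_finrank_range_of_norm_sub_lt [FiniteDimensional 𝕜 E] {f g : E →L[𝕜] F}
    {C : Submodule 𝕜 E} {a : ℝ} (hf : ∀ u ∈ C, a * ‖u‖ ≤ ‖f u‖) (hfg : ‖f - g‖ < a) :
    finrank 𝕜 C ≤ finrank 𝕜 (LinearMap.range (g : E →ₗ[𝕜] F)) := by
  refine (g : E →ₗ[𝕜] F).finrank_le_finrank_range_of_disjoint_ker ?_
  rw [LinearMap.disjoint_ker]
  intro u hu hgu
  replace hgu : g u = 0 := hgu
  have hbound : a * ‖u‖ ≤ ‖f - g‖ * ‖u‖ :=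
    calc a * ‖u‖ ≤ ‖f u‖ := hf u hu
      _ = ‖(f - g) u‖ := by simp [hgu]
      _ ≤ ‖f - g‖ * ‖u‖ := (f - g).le_opNorm u
  exact norm_le_zero_iff.1 (by nlinarith [norm_nonneg u])

theorem exists_pos_mul_norm_le_of_disjoint_ker [CompleteSpace 𝕜] [FiniteDimensional 𝕜 E]
    (f : E →L[𝕜] F) {C : Submodule 𝕜 E} (h : Disjoint C (LinearMap.ker (f : E →ₗ[𝕜] F))) :
    ∃ a > 0, ∀ u ∈ C, a * ‖u‖ ≤ ‖f u‖ := by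
  have hinj : LinearMap.ker ((f : E →ₗ[𝕜] F) ∘ₗ C.subtype) = ⊥ := by
    rwa [LinearMap.ker_comp, ← Submodule.disjoint_iff_comap_eq_bot]
  obtain ⟨c, hc, hfc⟩ := ((f : E →ₗ[𝕜] F) ∘ₗ C.subtype).exists_antilipschitzWith hinj
  refine ⟨(c : ℝ)⁻¹, by positivity, fun u hu => ?_⟩
  exact (inv_mul_le_iff₀ (by positivity)).2 (ZeroHomClass.bound_of_antilipschitz _ hfc ⟨u, hu⟩)

theorem eventually_finrank_range_le [CompleteSpace 𝕜] [FiniteDimensional 𝕜 E] (f : E →L[𝕜] F) :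
    ∀ᶠ g : E →L[𝕜] F in 𝓝 f, finrank 𝕜 (LinearMap.range (f : E →ₗ[𝕜] F))
      ≤ finrank 𝕜 (LinearMap.range (g : E →ₗ[𝕜] F)) := by
  obtain ⟨C, hC⟩ := (LinearMap.ker (f : E →ₗ[𝕜] F)).exists_isCompl
  obtain ⟨a, ha, hfC⟩ := f.exists_pos_mul_norm_le_of_disjoint_ker hC.symm.disjoint
  filter_upwards [Metric.ball_mem_nhds f ha] with g hg
  rw [(f : E →ₗ[𝕜] F).finrank_range_eq_of_isCompl_ker hC]
  exact finrank_le_finrank_range_of_norm_sub_lt hfC (mem_ball_iff_norm'.1 hg)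

end ContinuousLinearMap

theorem IsGeometric.finrank_range_le_of_norm_sub_lt {V W : Type*} [NormedAddCommGroup V]
    [InnerProductSpace ℝ V] [FiniteDimensional ℝ V] [NormedAddCommGroup W]
    [InnerProductSpace ℝ W] {f g : V →L[ℝ] W} {r : ℝ} (hf : IsGeometric f r)
    (hfg : ‖f - g‖ < √r) :
    finrank ℝ (LinearMap.range (f : V →ₗ[ℝ] W)) ≤ finrank ℝ (LinearMap.range (g : V →ₗ[ℝ] W)) := by
  obtain ⟨hr, C, hC, hinner⟩ := hf
  have hnorm : ∀ u ∈ C, √r * ‖u‖ ≤ ‖f u‖ := by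
    intro u hu
    have hsq := hinner u hu u hu
    rw [real_inner_self_eq_norm_sq, real_inner_self_eq_norm_sq] at hsq
    rw [← Real.sqrt_sq (norm_nonneg (f u)), hsq, Real.sqrt_mul hr.le,
      Real.sqrt_sq (norm_nonneg u)]
  rw [(f : V →ₗ[ℝ] W).finrank_range_eq_of_isCompl_ker hC]
  exact ContinuousLinearMap.finrank_le_finrank_range_of_norm_sub_lt hnorm hfg

theorem eventually_rank_eq_of_tendsto_geometric_general
    {V W : Type*} [NormedAddCommGroup V] [InnerProductSpace ℝ V] [FiniteDimensional ℝ V]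
    [NormedAddCommGroup W] [InnerProductSpace ℝ W]
    (T : V →L[ℝ] W) (Tk : ℕ → V →L[ℝ] W) (rk : ℕ → ℝ) (p : ℝ) (hp : 0 < p)
    (hpr : ∀ k, p ≤ rk k) (hgeo : ∀ k, IsGeometric (Tk k) (rk k))
    (hconv : Filter.Tendsto Tk Filter.atTop (nhds T)) :
    ∃ K : ℕ, ∀ k > K, Module.finrank ℝ (LinearMap.range (Tk k : V →ₗ[ℝ] W))
      = Module.finrank ℝ (LinearMap.range (T : V →ₗ[ℝ] W)) := by
  have hlower := hconv.eventually T.eventually_finrank_range_le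
  have hclose : ∀ᶠ k in atTop, ‖Tk k - T‖ < √p := by
    simpa only [dist_eq_norm] using Metric.tendsto_nhds.1 hconv (√p) (Real.sqrt_pos.2 hp)
  obtain ⟨K, hK⟩ := eventually_atTop.1 (hlower.and hclose)
  refine ⟨K, fun k hk => le_antisymm ?_ (hK k hk.le).1⟩
  exact (hgeo k).finrank_range_le_of_norm_sub_lt
    ((hK k hk.le).2.trans_le (Real.sqrt_le_sqrt (hpr k)))

/-- If a sequence of geometric functions `T k`, with conformality factors bounded below by
`p > 0`, converges to a linear map `T`, then eventually `rank (T k) = rank T`. -/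
theorem eventually_rank_eq_of_tendsto_geometric
    {V W : Type*} [NormedAddCommGroup V] [InnerProductSpace ℝ V] [FiniteDimensional ℝ V]
    [NormedAddCommGroup W] [InnerProductSpace ℝ W] [FiniteDimensional ℝ W]
    (T : V →L[ℝ] W) (Tk : ℕ → V →L[ℝ] W) (rk : ℕ → ℝ) (p : ℝ) (hp : 0 < p)
    (hpr : ∀ k, p ≤ rk k) (hgeo : ∀ k, IsGeometric (Tk k) (rk k))
    (hconv : Filter.Tendsto Tk Filter.atTop (nhds T)) :
    ∃ K : ℕ, ∀ k > K, Module.finrank ℝ (LinearMap.range (Tk k : V →ₗ[ℝ] W))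
      = Module.finrank ℝ (LinearMap.range (T : V →ₗ[ℝ] W)) :=
  eventually_rank_eq_of_tendsto_geometric_general T Tk rk p hp hpr hgeo hconv
end

section
/- Let V and W be finite-dimensional real inner product spaces, T : V → W linear, and {T_k} a sequence of geometric functions converging to T with conformality factors r_k ≥ p > 0. If α ∈ ker(T) with ‖α‖ = 1, then for all sufficiently large k, α does not lie in the Conf subspace of T_k. Consequently ker(T) ∩ Conf(T_k) = {0} for all sufficiently large k. -/
open scoped RealInnerProductSpace

/-- `f` is a geometric function with conformality factor `r > 0` and Conf subspace `C`:
`V = ker f ⊕ C` (direct sum, not necessarily orthogonal) and `f` scales inner products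
by `r` on `C`. -/
def IsGeometricWith {V W : Type*} [NormedAddCommGroup V] [InnerProductSpace ℝ V]
    [NormedAddCommGroup W] [InnerProductSpace ℝ W]
    (f : V →L[ℝ] W) (r : ℝ) (C : Submodule ℝ V) : Prop :=
  0 < r ∧ IsCompl (LinearMap.ker (f : V →ₗ[ℝ] W)) C ∧
    ∀ u ∈ C, ∀ v ∈ C, ⟪f u, f v⟫ = r * ⟪u, v⟫

/-! On its Conf subspace a geometric function `f` stretches every vector by exactly `√r`.
If `‖f - T‖ < √r`, a nonzero `x ∈ ker T ∩ C` would give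
`√r ‖x‖ = ‖f x‖ = ‖(f - T) x‖ < √r ‖x‖`. Convergence `T_k → T` together with `r_k ≥ p`
makes `‖T_k - T‖ < √p ≤ √r_k` for all large `k`. -/

namespace IsGeometricWith

variable {V W : Type*} [NormedAddCommGroup V] [InnerProductSpace ℝ V]
    [NormedAddCommGroup W] [InnerProductSpace ℝ W]
    {f : V →L[ℝ] W} {r : ℝ} {C : Submodule ℝ V}

theorem norm_map (hf : IsGeometricWith f r C) {x : V} (hx : x ∈ C) :
    ‖f x‖ = √r * ‖x‖ := by
  have hsq : ‖f x‖ ^ 2 = r * ‖x‖ ^ 2 := by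
    simpa only [real_inner_self_eq_norm_sq] using hf.2.2 x hx x hx
  rw [← Real.sqrt_sq (norm_nonneg (f x)), hsq, Real.sqrt_mul hf.1.le,
    Real.sqrt_sq (norm_nonneg x)]

theorem ker_inf_eq_bot_of_norm_sub_lt (hf : IsGeometricWith f r C) {T : V →L[ℝ] W}
    (hT : ‖f - T‖ < √r) : LinearMap.ker (T : V →ₗ[ℝ] W) ⊓ C = ⊥ := by
  refine eq_bot_iff.2 fun x ⟨hxT, hxC⟩ => (Submodule.mem_bot ℝ).2 ?_
  by_contra hx
  have hTx : T x = 0 := hxT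
  have : √r * ‖x‖ < √r * ‖x‖ :=
    calc √r * ‖x‖ = ‖(f - T) x‖ := by rw [← hf.norm_map hxC, sub_apply, hTx, sub_zero]
      _ ≤ ‖f - T‖ * ‖x‖ := (f - T).le_opNorm x
      _ < √r * ‖x‖ := mul_lt_mul_of_pos_right hT (norm_pos_iff.2 hx)
  exact lt_irrefl _ this

end IsGeometricWith

theorem eventually_ker_inf_conf_eq_bot_general
    {V W : Type*} [NormedAddCommGroup V] [InnerProductSpace ℝ V]
    [NormedAddCommGroup W] [InnerProductSpace ℝ W]
    (T : V →L[ℝ] W) (Tk : ℕ → V →L[ℝ] W) (rk : ℕ → ℝ) (C : ℕ → Submodule ℝ V)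
    (p : ℝ) (hp : 0 < p) (hpr : ∀ k, p ≤ rk k)
    (hgeo : ∀ k, IsGeometricWith (Tk k) (rk k) (C k))
    (hconv : Filter.Tendsto Tk Filter.atTop (nhds T)) :
    (∀ α : V, α ∈ LinearMap.ker (T : V →ₗ[ℝ] W) → ‖α‖ = 1 → ∃ K : ℕ, ∀ k > K, α ∉ C k) ∧
    (∃ K : ℕ, ∀ k > K, LinearMap.ker (T : V →ₗ[ℝ] W) ⊓ C k = ⊥) := by
  obtain ⟨K, hK⟩ := Metric.tendsto_atTop.1 hconv √p (Real.sqrt_pos.2 hp)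
  have hbot : ∀ k > K, LinearMap.ker (T : V →ₗ[ℝ] W) ⊓ C k = ⊥ := fun k hk =>
    (hgeo k).ker_inf_eq_bot_of_norm_sub_lt <|
      calc ‖Tk k - T‖ = dist (Tk k) T := (dist_eq_norm _ _).symm
        _ < √p := hK k hk.le
        _ ≤ √(rk k) := Real.sqrt_le_sqrt (hpr k)
  refine ⟨fun α hαT hα => ⟨K, fun k hk hαC => ?_⟩, K, hbot⟩
  have hα0 : α ∈ LinearMap.ker (T : V →ₗ[ℝ] W) ⊓ C k := ⟨hαT, hαC⟩
  rw [hbot k hk, Submodule.mem_bot] at hα0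
  simp [hα0] at hα

/-- If geometric functions `Tk k` with Conf subspaces `C k` and conformality factors bounded
below by `p > 0` converge to `T`, then any unit vector of `ker T` eventually avoids `C k`;
consequently `ker T ∩ C k = {0}` for all sufficiently large `k`. -/
theorem eventually_ker_inf_conf_eq_bot
    {V W : Type*} [NormedAddCommGroup V] [InnerProductSpace ℝ V] [FiniteDimensional ℝ V]
    [NormedAddCommGroup W] [InnerProductSpace ℝ W] [FiniteDimensional ℝ W]
    (T : V →L[ℝ] W) (Tk : ℕ → V →L[ℝ] W) (rk : ℕ → ℝ) (C : ℕ → Submodule ℝ V)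
    (p : ℝ) (hp : 0 < p) (hpr : ∀ k, p ≤ rk k)
    (hgeo : ∀ k, IsGeometricWith (Tk k) (rk k) (C k))
    (hconv : Filter.Tendsto Tk Filter.atTop (nhds T)) :
    (∀ α : V, α ∈ LinearMap.ker (T : V →ₗ[ℝ] W) → ‖α‖ = 1 → ∃ K : ℕ, ∀ k > K, α ∉ C k) ∧
    (∃ K : ℕ, ∀ k > K, LinearMap.ker (T : V →ₗ[ℝ] W) ⊓ C k = ⊥) :=
  eventually_ker_inf_conf_eq_bot_general T Tk rk C p hp hpr hgeo hconv
end

section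
/- Let V and W be finite-dimensional real inner product spaces, T : V → W linear, and T_k geometric functions converging to T with conformality factors bounded below by p > 0. Then for all sufficiently large k, rank(T_k) ≤ rank(T). -/
open scoped RealInnerProductSpace

/-! On `Conf(T_k)` the map `T_k` stretches every vector by `√r_k ≥ √p`, while eventually
`‖T_k - T‖ < √p`; so `T` kills no nonzero vector of `Conf(T_k)`. Hence `ker T` meets the complement
`Conf(T_k)` of `ker T_k` trivially, so `dim ker T ≤ dim ker T_k`, and rank–nullity concludes. -/

open Module

theorem Submodule.finrank_le_of_isCompl_of_disjoint {K V : Type*} [DivisionRing K]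
    [AddCommGroup V] [Module K V] [FiniteDimensional K V] {U U' C : Submodule K V}
    (hU : IsCompl U C) (hU' : Disjoint U' C) : finrank K U' ≤ finrank K U := by
  have hsum := Submodule.finrank_add_eq_of_isCompl hU
  have hle := Submodule.finrank_add_finrank_le_of_disjoint hU'
  omega

theorem LinearMap.finrank_range_le_of_isCompl_ker_of_disjoint_ker {K V V₂ : Type*}
    [DivisionRing K] [AddCommGroup V] [Module K V] [FiniteDimensional K V]
    [AddCommGroup V₂] [Module K V₂] {f g : V →ₗ[K] V₂} {C : Submodule K V}
    (hf : IsCompl (LinearMap.ker f) C) (hg : Disjoint (LinearMap.ker g) C) :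
    finrank K (LinearMap.range f) ≤ finrank K (LinearMap.range g) := by
  have hker := Submodule.finrank_le_of_isCompl_of_disjoint hf hg
  have hf' := LinearMap.finrank_range_add_finrank_ker f
  have hg' := LinearMap.finrank_range_add_finrank_ker g
  omega

namespace IsGeometricWith

variable {V W : Type*} [NormedAddCommGroup V] [InnerProductSpace ℝ V]
  [NormedAddCommGroup W] [InnerProductSpace ℝ W] {f : V →L[ℝ] W} {r : ℝ} {C : Submodule ℝ V}

theorem norm_sq_apply (hf : IsGeometricWith f r C) {x : V} (hx : x ∈ C) :
    ‖f x‖ ^ 2 = r * ‖x‖ ^ 2 := by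
  simpa only [real_inner_self_eq_norm_sq] using hf.2.2 x hx x hx

theorem disjoint_ker_of_norm_sub_sq_lt (hf : IsGeometricWith f r C) {T : V →L[ℝ] W}
    (hT : ‖f - T‖ ^ 2 < r) : Disjoint (LinearMap.ker (T : V →ₗ[ℝ] W)) C := by
  refine Submodule.disjoint_def.mpr fun x hxT hxC => ?_
  have hTx : T x = 0 := hxT
  have hfx : f x = (f - T) x := by simp [hTx]
  have hbound : r * ‖x‖ ^ 2 ≤ ‖f - T‖ ^ 2 * ‖x‖ ^ 2 :=
    calc r * ‖x‖ ^ 2 = ‖(f - T) x‖ ^ 2 := by rw [← hfx, hf.norm_sq_apply hxC]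
      _ ≤ (‖f - T‖ * ‖x‖) ^ 2 := by gcongr; exact (f - T).le_opNorm x
      _ = ‖f - T‖ ^ 2 * ‖x‖ ^ 2 := mul_pow _ _ _
  have hx : ‖x‖ ^ 2 = 0 := by nlinarith [sq_nonneg ‖x‖]
  simpa using hx

end IsGeometricWith

/-- If geometric functions `Tk k` with conformality factors bounded below by `p > 0`
converge to `T`, then eventually `rank (Tk k) ≤ rank T`. -/
theorem eventually_rank_le_of_tendsto_geometric
    {V W : Type*} [NormedAddCommGroup V] [InnerProductSpace ℝ V] [FiniteDimensional ℝ V]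
    [NormedAddCommGroup W] [InnerProductSpace ℝ W] [FiniteDimensional ℝ W]
    (T : V →L[ℝ] W) (Tk : ℕ → V →L[ℝ] W) (rk : ℕ → ℝ) (C : ℕ → Submodule ℝ V)
    (p : ℝ) (hp : 0 < p) (hpr : ∀ k, p ≤ rk k)
    (hgeo : ∀ k, IsGeometricWith (Tk k) (rk k) (C k))
    (hconv : Filter.Tendsto Tk Filter.atTop (nhds T)) :
    ∃ K : ℕ, ∀ k > K, Module.finrank ℝ (LinearMap.range (Tk k : V →ₗ[ℝ] W))
      ≤ Module.finrank ℝ (LinearMap.range (T : V →ₗ[ℝ] W)) := by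
  have hsmall : ∀ᶠ k in Filter.atTop, ‖Tk k - T‖ ^ 2 < p := by
    have hsq := (tendsto_iff_norm_sub_tendsto_zero.mp hconv).pow 2
    rw [zero_pow two_ne_zero] at hsq
    exact hsq.eventually_lt_const hp
  obtain ⟨K, hK⟩ := Filter.eventually_atTop.mp hsmall
  refine ⟨K, fun k hk => ?_⟩
  exact LinearMap.finrank_range_le_of_isCompl_ker_of_disjoint_ker (hgeo k).2.1
    ((hgeo k).disjoint_ker_of_norm_sub_sq_lt ((hK k hk.le).trans_le (hpr k)))
end

section
/- Let f : V → W be a linear map between finite-dimensional real inner product spaces that is a geometric function with conformality factor r and Conf subspace C. Then the Frobenius norm of f satisfies ‖f‖_F² ≥ r · rank(f). -/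
/-!
In an orthonormal basis `b` of `V`, `‖f‖_F² = ∑ ‖f bᵢ‖²`. Choosing `b` adapted to the orthogonal
decomposition `V = C ⊕ Cᗮ`, the `dim C` vectors lying in `C` each contribute `‖f bᵢ‖² = r`,
the others contribute nonnegatively, and `dim C = rank f` because `C` complements `ker f`.
-/

open scoped RealInnerProductSpace

/-- The squared Frobenius norm of a continuous linear map between finite-dimensional
real inner product spaces: `‖f‖_F² = trace (f* ∘ f)`. -/
noncomputable def frobSq {V W : Type*}
    [NormedAddCommGroup V] [InnerProductSpace ℝ V] [FiniteDimensional ℝ V]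
    [NormedAddCommGroup W] [InnerProductSpace ℝ W] [FiniteDimensional ℝ W]
    (f : V →L[ℝ] W) : ℝ :=
  LinearMap.trace ℝ V ((ContinuousLinearMap.adjoint f).comp f : V →ₗ[ℝ] V)

open Module

theorem Submodule.isInternal_cond_orthogonal {𝕜 E : Type*} [RCLike 𝕜] [NormedAddCommGroup E]
    [InnerProductSpace 𝕜 E] (U : Submodule 𝕜 E) [U.HasOrthogonalProjection] :
    DirectSum.IsInternal fun i : Bool => cond i U Uᗮ := by
  rw [DirectSum.isInternal_submodule_iff_isCompl _ (i := true) (j := false) (by decide)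
    (by ext i; cases i <;> simp)]
  exact U.isCompl_orthogonal

section

variable {V W : Type*} [NormedAddCommGroup V] [InnerProductSpace ℝ V] [FiniteDimensional ℝ V]
  [NormedAddCommGroup W] [InnerProductSpace ℝ W] [FiniteDimensional ℝ W]

theorem frobSq_eq_sum_norm_sq {ι : Type*} [Fintype ι] (f : V →L[ℝ] W)
    (b : OrthonormalBasis ι ℝ V) : frobSq f = ∑ i, ‖f (b i)‖ ^ 2 := by
  simp [frobSq, LinearMap.trace_eq_sum_inner _ b, ContinuousLinearMap.adjoint_inner_right]

theorem mul_finrank_le_frobSq (f : V →L[ℝ] W) {r : ℝ} (U : Submodule ℝ V)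
    (hU : ∀ u ∈ U, r * ‖u‖ ^ 2 ≤ ‖f u‖ ^ 2) : r * finrank ℝ U ≤ frobSq f := by
  have hA := U.isInternal_cond_orthogonal
  let b := hA.collectedOrthonormalBasis U.orthogonalFamily_self
    fun i => stdOrthonormalBasis ℝ (cond i U Uᗮ : Submodule ℝ V)
  have hb_mem := hA.collectedOrthonormalBasis_mem U.orthogonalFamily_self
    fun i => stdOrthonormalBasis ℝ (cond i U Uᗮ : Submodule ℝ V)
  have hbU (j : Fin (finrank ℝ U)) : b ⟨true, j⟩ ∈ U := hb_mem ⟨true, j⟩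
  calc r * finrank ℝ U = ∑ j : Fin (finrank ℝ U), r * ‖b ⟨true, j⟩‖ ^ 2 := by
        simp [b.orthonormal.1, mul_comm]
    _ ≤ ∑ j : Fin (finrank ℝ U), ‖f (b ⟨true, j⟩)‖ ^ 2 :=
        Finset.sum_le_sum fun j _ => hU _ (hbU j)
    _ ≤ ∑ i, ∑ j, ‖f (b ⟨i, j⟩)‖ ^ 2 := by
        rw [Fintype.sum_bool]
        exact le_add_of_nonneg_right (Finset.sum_nonneg fun j _ => sq_nonneg _)
    _ = frobSq f := by rw [frobSq_eq_sum_norm_sq f b, Fintype.sum_sigma]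

end

theorem LinearMap.finrank_range_eq_of_isCompl_ker_s6 {K V W : Type*} [DivisionRing K]
    [AddCommGroup V] [Module K V] [AddCommGroup W] [Module K W] {f : V →ₗ[K] W}
    {C : Submodule K V} (h : IsCompl (ker f) C) : finrank K (range f) = finrank K C :=
  (f.quotKerEquivRange.symm.trans (Submodule.quotientEquivOfIsCompl _ _ h)).finrank_eq

theorem IsGeometricWith.norm_sq_apply_s6 {V W : Type*} [NormedAddCommGroup V]
    [InnerProductSpace ℝ V] [NormedAddCommGroup W] [InnerProductSpace ℝ W] {f : V →L[ℝ] W}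
    {r : ℝ} {C : Submodule ℝ V} (h : IsGeometricWith f r C) {u : V} (hu : u ∈ C) :
    ‖f u‖ ^ 2 = r * ‖u‖ ^ 2 := by
  rw [← real_inner_self_eq_norm_sq, ← real_inner_self_eq_norm_sq, h.2.2 u hu u hu]

/-- A geometric function `f` with conformality factor `r` and Conf subspace `C` satisfies
`‖f‖_F² ≥ r · rank f`. -/
theorem frobSq_ge_of_geometric
    {V W : Type*} [NormedAddCommGroup V] [InnerProductSpace ℝ V] [FiniteDimensional ℝ V]
    [NormedAddCommGroup W] [InnerProductSpace ℝ W] [FiniteDimensional ℝ W]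
    (f : V →L[ℝ] W) (r : ℝ) (C : Submodule ℝ V) (hgeo : IsGeometricWith f r C) :
    r * (Module.finrank ℝ (LinearMap.range (f : V →ₗ[ℝ] W)) : ℝ) ≤ frobSq f := by
  rw [LinearMap.finrank_range_eq_of_isCompl_ker_s6 hgeo.2.1]
  exact mul_finrank_le_frobSq f C fun u hu => (hgeo.norm_sq_apply_s6 hu).ge
end

section
/- Let f : V → W be a linear map between finite-dimensional real inner product spaces and let H be a subspace with V = H ⊕ ker(f) (direct sum). Define f_H^◇ : W → V by f_H^◇(y) = (f|_H)*(y_1) where y = y_1 + y_2 with y_1 ∈ range(f), y_2 ∈ range(f)^⊥, and (f|_H)* is the adjoint of f|_H : H → range(f). Let P = f_H^◇ ∘ f. Then f is a geometric function with Conf subspace H and conformality factor r > 0 if and only if P ∘ P = r · P. -/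
open scoped RealInnerProductSpace

/-!
Write `P = D ∘ f`. Since `D` is adjoint to `f|_H` on `range f`, `⟪f u, f v⟫ = ⟪u, P v⟫`
for `u ∈ H`; as `P` takes values in `H`, `f` scales inner products on `H` by `r` iff
`P = r • id` on `H`. This makes `P ∘ P = r • P` immediate. Conversely, for `v ∈ H` the
vector `e = P v - r • v ∈ H` satisfies `P e = 0`, hence `‖f e‖² = ⟪e, P e⟫ = 0`, and
`e = 0` because `H ∩ ker f = 0`.
-/

theorem Submodule.eq_of_forall_inner_eq {V : Type*} [NormedAddCommGroup V]
    [InnerProductSpace ℝ V] {H : Submodule ℝ V} {x y : V} (hx : x ∈ H) (hy : y ∈ H)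
    (h : ∀ u ∈ H, ⟪u, x⟫ = ⟪u, y⟫) : x = y :=
  congrArg Subtype.val
    (ext_inner_left ℝ (x := (⟨x, hx⟩ : H)) (y := ⟨y, hy⟩) fun u => h u u.2)

section

variable {V W : Type*} [NormedAddCommGroup V] [InnerProductSpace ℝ V]
  [NormedAddCommGroup W] [InnerProductSpace ℝ W]
  {f : V →L[ℝ] W} {H : Submodule ℝ V} {D : W →L[ℝ] V}

theorem apply_eq_zero_of_comp_apply_eq_zero
    (hDadj : ∀ u ∈ H, ∀ x, ⟪f u, f x⟫ = ⟪u, D (f x)⟫) {e : V} (he : e ∈ H)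
    (h : D (f e) = 0) : f e = 0 :=
  inner_self_eq_zero.mp (by rw [hDadj e he e, h, inner_zero_right])

theorem forall_inner_apply_eq_mul_iff (hDmem : ∀ y, D y ∈ H)
    (hDadj : ∀ u ∈ H, ∀ x, ⟪f u, f x⟫ = ⟪u, D (f x)⟫) (r : ℝ) :
    (∀ u ∈ H, ∀ v ∈ H, ⟪f u, f v⟫ = r * ⟪u, v⟫) ↔
      ∀ v ∈ H, D (f v) = r • v := by
  refine ⟨fun h v hv => ?_,
    fun h u hu v hv => by rw [hDadj u hu v, h v hv, inner_smul_right]⟩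
  refine H.eq_of_forall_inner_eq (hDmem _) (H.smul_mem r hv) fun u hu => ?_
  rw [← hDadj u hu v, h u hu v hv, inner_smul_right]

theorem comp_comp_eq_smul_iff (hDmem : ∀ y, D y ∈ H)
    (hDadj : ∀ u ∈ H, ∀ x, ⟪f u, f x⟫ = ⟪u, D (f x)⟫)
    (hdisj : Disjoint (LinearMap.ker (f : V →ₗ[ℝ] W)) H) (r : ℝ) :
    (D.comp f).comp (D.comp f) = r • D.comp f ↔ ∀ v ∈ H, D (f v) = r • v := by
  constructor
  · intro hPP v hv
    have hPPv : D (f (D (f v))) = r • D (f v) := congrArg (fun P : V →L[ℝ] V => P v) hPP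
    have he : D (f v) - r • v ∈ H := H.sub_mem (hDmem _) (H.smul_mem r hv)
    have hPe : D (f (D (f v) - r • v)) = 0 := by
      rw [map_sub, map_smul, map_sub, map_smul, hPPv, sub_self]
    have hfe := apply_eq_zero_of_comp_apply_eq_zero hDadj he hPe
    exact sub_eq_zero.mp (Submodule.disjoint_def.mp hdisj _ hfe he)
  · intro h
    ext v
    exact h _ (hDmem (f v))

end

theorem isGeometricWith_iff_P_comp_P_general
    {V W : Type*} [NormedAddCommGroup V] [InnerProductSpace ℝ V]
    [NormedAddCommGroup W] [InnerProductSpace ℝ W]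
    (f : V →L[ℝ] W) (H : Submodule ℝ V) (hH : IsCompl (LinearMap.ker (f : V →ₗ[ℝ] W)) H)
    (D : W →L[ℝ] V)
    (hDmem : ∀ y : W, D y ∈ H)
    (hDadj : ∀ u ∈ H, ∀ y ∈ LinearMap.range (f : V →ₗ[ℝ] W), ⟪f u, y⟫ = ⟪u, D y⟫)
    (r : ℝ) (hr : 0 < r) :
    IsGeometricWith f r H ↔ (D.comp f).comp (D.comp f) = r • D.comp f := by
  have hDadj' : ∀ u ∈ H, ∀ x, ⟪f u, f x⟫ = ⟪u, D (f x)⟫ :=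
    fun u hu x => hDadj u hu (f x) ⟨x, rfl⟩
  rw [comp_comp_eq_smul_iff hDmem hDadj' hH.disjoint,
    ← forall_inner_apply_eq_mul_iff hDmem hDadj']
  simp only [IsGeometricWith, hr, hH, true_and]

/-- With `V = H ⊕ ker f` and `D = f_H^◇` (the adjoint of `f|_H : H → range f` on `range f`,
zero on `(range f)ᗮ`), setting `P = f_H^◇ ∘ f`, the map `f` is a geometric function with
Conf subspace `H` and conformality factor `r > 0` if and only if `P ∘ P = r • P`. -/
theorem isGeometricWith_iff_P_comp_P
    {V W : Type*} [NormedAddCommGroup V] [InnerProductSpace ℝ V] [FiniteDimensional ℝ V]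
    [NormedAddCommGroup W] [InnerProductSpace ℝ W] [FiniteDimensional ℝ W]
    (f : V →L[ℝ] W) (H : Submodule ℝ V) (hH : IsCompl (LinearMap.ker (f : V →ₗ[ℝ] W)) H)
    (D : W →L[ℝ] V)
    (hD0 : ∀ y ∈ (LinearMap.range (f : V →ₗ[ℝ] W))ᗮ, D y = 0)
    (hDmem : ∀ y : W, D y ∈ H)
    (hDadj : ∀ u ∈ H, ∀ y ∈ LinearMap.range (f : V →ₗ[ℝ] W), ⟪f u, y⟫ = ⟪u, D y⟫)
    (r : ℝ) (hr : 0 < r) :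
    IsGeometricWith f r H ↔ (D.comp f).comp (D.comp f) = r • D.comp f :=
  isGeometricWith_iff_P_comp_P_general f H hH D hDmem hDadj r hr
end

section
/- Let f : V → W be a linear map between finite-dimensional real inner product spaces and let H be a subspace with V = H ⊕ ker(f). Define f_H^◇ : W → V as the adjoint of f|_H : H → range(f) on range(f) and zero on range(f)^⊥, and let Q = f ∘ f_H^◇ : W → W. Then f is a geometric function with Conf subspace H and conformality factor r > 0 if and only if Q ∘ Q = r · Q. -/
open scoped RealInnerProductSpace

section

variable {V W : Type*} [NormedAddCommGroup V] [InnerProductSpace ℝ V]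
  [NormedAddCommGroup W] [InnerProductSpace ℝ W]
  {f : V →L[ℝ] W} {D : W →L[ℝ] V} {H : Submodule ℝ V} {r : ℝ}

theorem inner_map_map_eq_mul_iff_apply_apply_eq_smul (hDmem : ∀ y, D y ∈ H)
    (hDadj : ∀ u ∈ H, ∀ v, ⟪f u, f v⟫ = ⟪u, D (f v)⟫) :
    (∀ u ∈ H, ∀ v ∈ H, ⟪f u, f v⟫ = r * ⟪u, v⟫) ↔ ∀ v ∈ H, D (f v) = r • v := by
  constructor
  · intro hconf v hv
    have hx : D (f v) - r • v ∈ H := H.sub_mem (hDmem _) (H.smul_mem r hv)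
    have horth : ∀ u ∈ H, ⟪u, D (f v) - r • v⟫ = 0 := fun u hu => by
      rw [inner_sub_right, ← hDadj u hu v, hconf u hu v hv, real_inner_smul_right, sub_self]
    exact sub_eq_zero.mp (inner_self_eq_zero.mp (horth _ hx))
  · intro hDf u hu v hv
    rw [hDadj u hu v, hDf v hv, real_inner_smul_right]

theorem comp_comp_eq_smul_iff_apply_apply_eq_smul
    (hdisj : Disjoint (LinearMap.ker (f : V →ₗ[ℝ] W)) H) (hDmem : ∀ y, D y ∈ H)
    (hDadj : ∀ u ∈ H, ∀ v, ⟪f u, f v⟫ = ⟪u, D (f v)⟫) :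
    (f.comp D).comp (f.comp D) = r • f.comp D ↔ ∀ v ∈ H, D (f v) = r • v := by
  have hinj : ∀ x ∈ H, f x = 0 → x = 0 := fun x hx hfx =>
    Submodule.disjoint_def.mp hdisj x (LinearMap.mem_ker.mpr hfx) hx
  constructor
  · intro hQ
    have hDfDf : ∀ v, D (f (D (f v))) = r • D (f v) := fun v => by
      have hQv : f (D (f (D (f v)))) = r • f (D (f v)) := DFunLike.congr_fun hQ (f v)
      refine sub_eq_zero.mp (hinj _ (H.sub_mem (hDmem _) (H.smul_mem r (hDmem _))) ?_)
      rw [map_sub, map_smul, hQv, sub_self]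
    intro v hv
    have hx : D (f v) - r • v ∈ H := H.sub_mem (hDmem _) (H.smul_mem r hv)
    have hfx : ⟪f (D (f v) - r • v), f (D (f v) - r • v)⟫ = 0 := by
      rw [hDadj _ hx, map_sub, map_smul, map_sub, map_smul, hDfDf, sub_self, inner_zero_right]
    exact sub_eq_zero.mp (hinj _ hx (inner_self_eq_zero.mp hfx))
  · intro hDf
    ext y
    simp [hDf (D y) (hDmem y)]

end

theorem isGeometricWith_iff_Q_comp_Q_general
    {V W : Type*} [NormedAddCommGroup V] [InnerProductSpace ℝ V]
    [NormedAddCommGroup W] [InnerProductSpace ℝ W]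
    (f : V →L[ℝ] W) (H : Submodule ℝ V) (hH : IsCompl (LinearMap.ker (f : V →ₗ[ℝ] W)) H)
    (D : W →L[ℝ] V)
    (hDmem : ∀ y : W, D y ∈ H)
    (hDadj : ∀ u ∈ H, ∀ y ∈ LinearMap.range (f : V →ₗ[ℝ] W), ⟪f u, y⟫ = ⟪u, D y⟫)
    (r : ℝ) (hr : 0 < r) :
    IsGeometricWith f r H ↔ (f.comp D).comp (f.comp D) = r • f.comp D := by
  have hDadj' : ∀ u ∈ H, ∀ v, ⟪f u, f v⟫ = ⟪u, D (f v)⟫ := fun u hu v =>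
    hDadj u hu (f v) (LinearMap.mem_range_self _ v)
  rw [comp_comp_eq_smul_iff_apply_apply_eq_smul hH.disjoint hDmem hDadj',
    ← inner_map_map_eq_mul_iff_apply_apply_eq_smul hDmem hDadj']
  exact ⟨fun h => h.2.2, fun h => ⟨hr, hH, h⟩⟩

/-- With `V = H ⊕ ker f` and `D = f_H^◇`, setting `Q = f ∘ f_H^◇ : W → W`, the map `f` is a
geometric function with Conf subspace `H` and conformality factor `r > 0` if and only if
`Q ∘ Q = r • Q`. -/
theorem isGeometricWith_iff_Q_comp_Q
    {V W : Type*} [NormedAddCommGroup V] [InnerProductSpace ℝ V] [FiniteDimensional ℝ V]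
    [NormedAddCommGroup W] [InnerProductSpace ℝ W] [FiniteDimensional ℝ W]
    (f : V →L[ℝ] W) (H : Submodule ℝ V) (hH : IsCompl (LinearMap.ker (f : V →ₗ[ℝ] W)) H)
    (D : W →L[ℝ] V)
    (hD0 : ∀ y ∈ (LinearMap.range (f : V →ₗ[ℝ] W))ᗮ, D y = 0)
    (hDmem : ∀ y : W, D y ∈ H)
    (hDadj : ∀ u ∈ H, ∀ y ∈ LinearMap.range (f : V →ₗ[ℝ] W), ⟪f u, y⟫ = ⟪u, D y⟫)
    (r : ℝ) (hr : 0 < r) :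
    IsGeometricWith f r H ↔ (f.comp D).comp (f.comp D) = r • f.comp D :=
  isGeometricWith_iff_Q_comp_Q_general f H hH D hDmem hDadj r hr
end

section
/- Let f : V → W be a linear map between finite-dimensional real inner product spaces with H = ker(f)^⊥. Then f is a geometric function with Conf subspace H and conformality factor r > 0 if and only if (f* ∘ f)² = r · (f* ∘ f), where f* is the adjoint of f. -/
/-!
Write `T = f† ∘ f` and `H = (ker f)ᗮ`. Since `⟪T u, v⟫ = ⟪f u, f v⟫` and `T` maps into `H`,
conformality with factor `r` on `H` says that `T y - r • y` lies in `H ∩ Hᗮ = 0` for `y ∈ H`,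
i.e. `T = r` on `H`. As `range T ⊆ H` and `ker T = ker f`, this is equivalent to `T² = r T`.
-/

open scoped RealInnerProductSpace

namespace ContinuousLinearMap

variable {V W : Type*} [NormedAddCommGroup V] [InnerProductSpace ℝ V] [CompleteSpace V]
  [NormedAddCommGroup W] [InnerProductSpace ℝ W] [CompleteSpace W] (f : V →L[ℝ] W)

theorem adjoint_comp_self_apply_mem_orthogonal_ker (x : V) :
    (adjoint f ∘L f) x ∈ (LinearMap.ker (f : V →ₗ[ℝ] W))ᗮ := by
  rw [f.orthogonal_ker]
  exact Submodule.le_topologicalClosure _ ⟨f x, rfl⟩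

theorem adjoint_comp_self_apply_eq_smul_iff {y : V}
    (hy : y ∈ (LinearMap.ker (f : V →ₗ[ℝ] W))ᗮ) (r : ℝ) :
    (adjoint f ∘L f) y = r • y ↔
      ∀ v ∈ (LinearMap.ker (f : V →ₗ[ℝ] W))ᗮ, ⟪f y, f v⟫ = r * ⟪y, v⟫ := by
  have inner_eq (v : V) : ⟪(adjoint f ∘L f) y, v⟫ = ⟪f y, f v⟫ := by
    simp [adjoint_inner_left]
  refine ⟨fun h v _ => by rw [← inner_eq, h, real_inner_smul_left], fun h => ?_⟩
  set d := (adjoint f ∘L f) y - r • y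
  have hd : d ∈ (LinearMap.ker (f : V →ₗ[ℝ] W))ᗮ :=
    sub_mem (f.adjoint_comp_self_apply_mem_orthogonal_ker y) (Submodule.smul_mem _ r hy)
  have hdd : ⟪d, d⟫ = 0 := by
    rw [inner_sub_left, inner_eq, h d hd, real_inner_smul_left, sub_self]
  exact sub_eq_zero.mp (inner_self_eq_zero.mp hdd)

theorem adjoint_comp_self_sq_eq_smul_iff (r : ℝ) :
    (adjoint f ∘L f) ∘L (adjoint f ∘L f) = r • (adjoint f ∘L f) ↔
      ∀ y ∈ (LinearMap.ker (f : V →ₗ[ℝ] W))ᗮ, (adjoint f ∘L f) y = r • y := by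
  set T := adjoint f ∘L f
  refine ⟨fun h y hy => ?_,
    fun h => ext fun x => h _ (f.adjoint_comp_self_apply_mem_orthogonal_ker x)⟩
  have hker : T y - r • y ∈ LinearMap.ker (f : V →ₗ[ℝ] W) := by
    rw [← f.ker_adjoint_comp_self, LinearMap.mem_ker, coe_coe, map_sub, map_smul, sub_eq_zero]
    exact congr($h y)
  have horth : T y - r • y ∈ (LinearMap.ker (f : V →ₗ[ℝ] W))ᗮ :=
    sub_mem (f.adjoint_comp_self_apply_mem_orthogonal_ker y) (Submodule.smul_mem _ r hy)
  exact sub_eq_zero.mp ((Submodule.orthogonal_disjoint _).le_bot ⟨hker, horth⟩)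

end ContinuousLinearMap

/-- With `H = (ker f)ᗮ`, the map `f` is a geometric function with Conf subspace `H` and
conformality factor `r > 0` if and only if `(f* ∘ f)² = r • (f* ∘ f)`. -/
theorem isGeometricWith_orthogonal_iff_adjoint_comp
    {V W : Type*} [NormedAddCommGroup V] [InnerProductSpace ℝ V] [FiniteDimensional ℝ V]
    [NormedAddCommGroup W] [InnerProductSpace ℝ W] [FiniteDimensional ℝ W]
    (f : V →L[ℝ] W) (r : ℝ) (hr : 0 < r) :
    IsGeometricWith f r (LinearMap.ker (f : V →ₗ[ℝ] W))ᗮ ↔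
      ((ContinuousLinearMap.adjoint f).comp f).comp ((ContinuousLinearMap.adjoint f).comp f)
        = r • (ContinuousLinearMap.adjoint f).comp f := by
  rw [f.adjoint_comp_self_sq_eq_smul_iff]
  simp only [IsGeometricWith, hr, Submodule.isCompl_orthogonal, true_and]
  exact forall₂_congr fun y hy => (f.adjoint_comp_self_apply_eq_smul_iff hy r).symm
end
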